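/- For every k ≥ 1 and n ≥ 1, substituting the power sum polynomial s_i in n variables for the variable x_i in the polynomial k_k yields k! times the complete homogeneous symmetric polynomial of degree k in n variables: k_k(s_1, s_2, …, s_k) = k! · w_k. -/
import Mathlib


open MvPolynomial

/-- The unique `ℚ`-linear derivation `δ` of `ℚ[x₁, x₂, …]` with `δ xₖ = k · xₖ₊₁`. -/
noncomputable def δ : Derivation ℚ (MvPolynomial ℕ ℚ) (MvPolynomial ℕ ℚ) :=
  mkDerivation ℚ fun k => (k : MvPolynomial ℕ ℚ) * X (k + 1)

/-- The complementary polynomials: `k 1 = x₁` and `k (i+1) = x₁ · k i + δ (k i)`.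
(The value at `0` is a harmless base case making the recursion valid.) -/
noncomputable def cauchyK : ℕ → MvPolynomial ℕ ℚ
  | 0 => 1
  | i + 1 => X 1 * cauchyK i + δ (cauchyK i)

section Aux

variable {σ : Type*} [Fintype σ] [DecidableEq σ]

/-- The derivation `D` with `D xᵢ = xᵢ²`. -/
noncomputable def Dsq (σ : Type*) : Derivation ℚ (MvPolynomial σ ℚ) (MvPolynomial σ ℚ) :=
  mkDerivation ℚ fun i => X i ^ 2

lemma Dsq_X_pow (i : σ) (m : ℕ) :
    Dsq σ (X i ^ m) = (m : MvPolynomial σ ℚ) * X i ^ (m + 1) := by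
  cases m with
  | zero => simp
  | succ m =>
    rw [Derivation.leibniz_pow]
    simp only [Dsq, mkDerivation_X, smul_eq_mul, nsmul_eq_mul, Nat.add_sub_cancel]
    ring

lemma Dsq_psum (m : ℕ) :
    Dsq σ (psum σ ℚ m) = (m : MvPolynomial σ ℚ) * psum σ ℚ (m + 1) := by
  simp only [psum, map_sum, Dsq_X_pow, Finset.mul_sum]

lemma aeval_δ (p : MvPolynomial ℕ ℚ) :
    aeval (fun i : ℕ => psum σ ℚ i) (δ p) = Dsq σ (aeval (fun i : ℕ => psum σ ℚ i) p) := by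
  induction p using MvPolynomial.induction_on with
  | C r => simp
  | add p q hp hq => simp only [map_add, hp, hq]
  | mul_X p i hp =>
    rw [Derivation.leibniz, map_add, map_mul, Derivation.leibniz]
    have hδX : aeval (fun i : ℕ => psum σ ℚ i) (δ (X i)) = Dsq σ (psum σ ℚ i) := by
      simp only [δ, mkDerivation_X, map_mul, aeval_X, map_natCast]
      rw [Dsq_psum]
    simp only [smul_eq_mul, map_mul, hp, hδX, aeval_X]

lemma prod_map_X (m : Multiset σ) :
    (m.map X).prod = monomial (Multiset.toFinsupp m) (1 : ℚ) := by
  induction m using Multiset.induction_on with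
  | empty => simp
  | cons a s ih =>
    rw [Multiset.map_cons, Multiset.prod_cons, ih, ← Multiset.singleton_add,
      map_add, Multiset.toFinsupp_singleton, X, monomial_mul, one_mul]

lemma hsymm_spec (k : ℕ) :
    hsymm σ ℚ k = ∑ s : Sym σ k, monomial (Multiset.toFinsupp ↑s) (1 : ℚ) := by
  simp only [hsymm, prod_map_X]
  rfl

lemma Dsq_monomial (d : σ →₀ ℕ) :
    Dsq σ (monomial d (1 : ℚ)) =
      ∑ i : σ, (d i) • monomial (d + Finsupp.single i 1) (1 : ℚ) := by
  rw [Dsq, mkDerivation_monomial, one_smul]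
  rw [Finsupp.sum_fintype _ _ (by intro i; simp)]
  refine Finset.sum_congr rfl fun i _ => ?_
  by_cases h : d i = 0
  · simp [h]
  · have h1 : 1 ≤ d i := Nat.one_le_iff_ne_zero.mpr h
    have hX : (X i : MvPolynomial σ ℚ) ^ 2 = monomial (Finsupp.single i 2) 1 := by
      rw [X, monomial_pow, one_pow, Finsupp.smul_single, smul_eq_mul, mul_one]
    have heq : d - Finsupp.single i 1 + Finsupp.single i 2 = d + Finsupp.single i 1 := by
      ext j
      by_cases hj : j = i
      · subst hj
        simp only [Finsupp.add_apply, Finsupp.tsub_apply, Finsupp.single_eq_same]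
        omega
      · simp [Finsupp.single_apply, Ne.symm hj]
    rw [smul_eq_mul, hX, monomial_mul, mul_one, heq]
    have h2 : (d i) • monomial (d + Finsupp.single i 1) (1 : ℚ) =
        monomial (d + Finsupp.single i 1) ((d i) • (1 : ℚ)) := (map_nsmul _ _ _).symm
    rw [h2]
    simp

lemma psum_one_mul_monomial (d : σ →₀ ℕ) :
    psum σ ℚ 1 * monomial d (1 : ℚ) =
      ∑ i : σ, monomial (d + Finsupp.single i 1) (1 : ℚ) := by
  rw [psum, Finset.sum_mul]
  refine Finset.sum_congr rfl fun i _ => ?_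
  rw [pow_one, X, monomial_mul, one_mul, add_comm]

lemma step_fixed (i : σ) (k : ℕ) :
    ∑ s : Sym σ k, ((Multiset.toFinsupp (↑s : Multiset σ)) i + 1) •
        monomial (Multiset.toFinsupp (↑s : Multiset σ) + Finsupp.single i 1) (1 : ℚ) =
    ∑ t : Sym σ (k + 1), ((Multiset.toFinsupp (↑t : Multiset σ)) i) •
        monomial (Multiset.toFinsupp (↑t : Multiset σ)) (1 : ℚ) := by
  rw [← Finset.sum_filter_of_ne (p := fun t : Sym σ (k+1) => i ∈ t)
    (fun t _ h => by
      by_contra hmem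
      apply h
      have : Multiset.count i (↑t : Multiset σ) = 0 :=
        Multiset.count_eq_zero_of_notMem (by simpa [Sym.mem_coe] using hmem)
      simp [Multiset.toFinsupp_apply, this])]
  refine Finset.sum_bij' (fun s _ => i ::ₛ s) (fun t ht => t.erase i (by
      simpa using (Finset.mem_filter.mp ht).2)) ?_ ?_ ?_ ?_ ?_
  · intro s _
    simp [Sym.mem_cons_self]
  · intro t _
    simp
  · intro s hs
    exact Sym.erase_cons_head s i
  · intro t ht
    exact Sym.cons_erase _
  · intro s _
    have hcoe : ((i ::ₛ s : Sym σ (k+1)) : Multiset σ) = i ::ₘ ↑s := Sym.coe_cons s i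
    have h1 : Multiset.toFinsupp ((i ::ₛ s : Sym σ (k+1)) : Multiset σ)
        = Multiset.toFinsupp (↑s : Multiset σ) + Finsupp.single i 1 := by
      rw [hcoe, ← Multiset.singleton_add, map_add, Multiset.toFinsupp_singleton, add_comm]
    rw [h1]
    congr 1
    simp [Finsupp.add_apply]

lemma key_step (k : ℕ) :
    psum σ ℚ 1 * hsymm σ ℚ k + Dsq σ (hsymm σ ℚ k)
      = ((k : MvPolynomial σ ℚ) + 1) * hsymm σ ℚ (k + 1) := by
  rw [hsymm_spec k, hsymm_spec (k + 1), Finset.mul_sum, map_sum, Finset.mul_sum,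
    ← Finset.sum_add_distrib]
  have lhs : ∀ s : Sym σ k,
      psum σ ℚ 1 * monomial (Multiset.toFinsupp (↑s : Multiset σ)) (1 : ℚ)
        + Dsq σ (monomial (Multiset.toFinsupp (↑s : Multiset σ)) (1 : ℚ))
      = ∑ i : σ, ((Multiset.toFinsupp (↑s : Multiset σ)) i + 1) •
          monomial (Multiset.toFinsupp (↑s : Multiset σ) + Finsupp.single i 1) (1 : ℚ) := by
    intro s
    rw [psum_one_mul_monomial, Dsq_monomial, ← Finset.sum_add_distrib]
    refine Finset.sum_congr rfl fun i _ => ?_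
    rw [add_smul, one_smul, add_comm]
  have rhs : ∀ t : Sym σ (k + 1),
      ((k : MvPolynomial σ ℚ) + 1) * monomial (Multiset.toFinsupp (↑t : Multiset σ)) (1 : ℚ)
      = ∑ i : σ, ((Multiset.toFinsupp (↑t : Multiset σ)) i) •
          monomial (Multiset.toFinsupp (↑t : Multiset σ)) (1 : ℚ) := by
    intro t
    have hcard : ∑ i : σ, (Multiset.toFinsupp (↑t : Multiset σ)) i = k + 1 := by
      simp only [Multiset.toFinsupp_apply]
      calc ∑ i : σ, Multiset.count i (↑t : Multiset σ)
          = ∑ i ∈ (↑t : Multiset σ).toFinset, Multiset.count i (↑t : Multiset σ) :=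
            (Finset.sum_subset (Finset.subset_univ _) (fun x _ hx =>
              Multiset.count_eq_zero_of_notMem
                (fun h => hx (Multiset.mem_toFinset.mpr h)))).symm
        _ = Multiset.card (↑t : Multiset σ) := Multiset.toFinset_sum_count_eq _
        _ = k + 1 := t.2
    rw [← Finset.sum_smul, hcard]
    have : ((k : MvPolynomial σ ℚ) + 1) = ((k + 1 : ℕ) : MvPolynomial σ ℚ) := by push_cast; ring
    rw [this, nsmul_eq_mul]
  calc ∑ s : Sym σ k, (psum σ ℚ 1 * monomial (Multiset.toFinsupp (↑s : Multiset σ)) (1 : ℚ)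
        + Dsq σ (monomial (Multiset.toFinsupp (↑s : Multiset σ)) (1 : ℚ)))
      = ∑ s : Sym σ k, ∑ i : σ, ((Multiset.toFinsupp (↑s : Multiset σ)) i + 1) •
          monomial (Multiset.toFinsupp (↑s : Multiset σ) + Finsupp.single i 1) (1 : ℚ) :=
        Finset.sum_congr rfl fun s _ => lhs s
    _ = ∑ i : σ, ∑ s : Sym σ k, ((Multiset.toFinsupp (↑s : Multiset σ)) i + 1) •
          monomial (Multiset.toFinsupp (↑s : Multiset σ) + Finsupp.single i 1) (1 : ℚ) :=
        Finset.sum_comm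
    _ = ∑ i : σ, ∑ t : Sym σ (k + 1), ((Multiset.toFinsupp (↑t : Multiset σ)) i) •
          monomial (Multiset.toFinsupp (↑t : Multiset σ)) (1 : ℚ) :=
        Finset.sum_congr rfl fun i _ => step_fixed i k
    _ = ∑ t : Sym σ (k + 1), ∑ i : σ, ((Multiset.toFinsupp (↑t : Multiset σ)) i) •
          monomial (Multiset.toFinsupp (↑t : Multiset σ)) (1 : ℚ) := Finset.sum_comm
    _ = ∑ t : Sym σ (k + 1),
          ((k : MvPolynomial σ ℚ) + 1) * monomial (Multiset.toFinsupp (↑t : Multiset σ)) (1 : ℚ) :=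
        Finset.sum_congr rfl fun t _ => (rhs t).symm

end Aux

/-- Substituting the power sum `sᵢ` in `n` variables for the variable `xᵢ` in the
complementary polynomial `kₖ` yields `k!` times the complete homogeneous symmetric
polynomial of degree `k`:  `kₖ (s₁, …, sₖ) = k! · wₖ`. -/
theorem aeval_psum_cauchyK (k n : ℕ) (hk : 1 ≤ k) (hn : 1 ≤ n) :
    aeval (fun i : ℕ => psum (Fin n) ℚ i) (cauchyK k) =
      (k.factorial : MvPolynomial (Fin n) ℚ) * hsymm (Fin n) ℚ k := by
  induction k with
  | zero => omega
  | succ k ih =>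
    cases Nat.eq_or_lt_of_le hk with
    | inl h =>
      have hk0 : k = 0 := by omega
      subst hk0
      show aeval (fun i : ℕ => psum (Fin n) ℚ i) (X 1 * cauchyK 0 + δ (cauchyK 0)) = _
      have : cauchyK 0 = 1 := rfl
      rw [this, mul_one, Derivation.map_one_eq_zero, add_zero, aeval_X]
      simp [hsymm_one, psum_one, Nat.factorial]
    | inr h =>
      have hk1 : 1 ≤ k := by omega
      have ihk := ih hk1
      show aeval (fun i : ℕ => psum (Fin n) ℚ i) (X 1 * cauchyK k + δ (cauchyK k)) = _
      rw [map_add, map_mul, aeval_X, aeval_δ, ihk]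
      have hD : Dsq (Fin n) ((k.factorial : MvPolynomial (Fin n) ℚ) * hsymm (Fin n) ℚ k)
          = (k.factorial : MvPolynomial (Fin n) ℚ) * Dsq (Fin n) (hsymm (Fin n) ℚ k) := by
        have : ((k.factorial : ℕ) : MvPolynomial (Fin n) ℚ) * hsymm (Fin n) ℚ k
            = ((k.factorial : ℚ)) • hsymm (Fin n) ℚ k := by
          rw [smul_eq_C_mul]; norm_cast
        rw [this, Derivation.map_smul, smul_eq_C_mul]
        norm_cast
      rw [hD, mul_left_comm, ← mul_add, key_step k]
      rw [Nat.factorial_succ]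
      push_cast
      ring
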